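/- arXiv:1211.7236 — 3 statements merged into one kernel-verified Lean document; each statement's English description precedes it below -/
import Mathlib

section
/- Let ω > 0 and let ρ : [0,∞) → ℂ be of class C². Then for every t ≥ 0, | ∫₀ᵗ ω ρ(s) sin((t−s)ω) ds − ρ(t) + ρ(0) cos(tω) + (ρ'(0)/ω) sin(tω) | ≤ (t/ω) · sup_{s∈[0,t]} |ρ''(s)|. -/
/-!
Put `φ(s) = (t - s) ω`. The function `F(s) = cos φ(s) • ρ(s) + (ω⁻¹ sin φ(s)) • ρ'(s)` has derivative
`(ω sin φ(s)) • ρ(s) + (ω⁻¹ sin φ(s)) • ρ''(s)`: the two `cos φ • ρ'` terms cancel. Integrating over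
`[0, t]`, the left-hand side of the estimate equals `-∫₀ᵗ (ω⁻¹ sin φ(s)) • ρ''(s) ds`, whose norm is at
most `t ω⁻¹ sup |ρ''|`.
-/

open MeasureTheory Real intervalIntegral

section Duhamel

variable {E : Type*} [NormedAddCommGroup E] [NormedSpace ℝ E]

theorem hasDerivAt_cos_smul_add_sin_smul {ω t s : ℝ} (hω : ω ≠ 0) {ρ ρ' : ℝ → E} {ρ'' : E}
    (hρ : HasDerivAt ρ (ρ' s) s) (hρ' : HasDerivAt ρ' ρ'' s) :
    HasDerivAt (fun s => cos ((t - s) * ω) • ρ s + (ω⁻¹ * sin ((t - s) * ω)) • ρ' s)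
      ((ω * sin ((t - s) * ω)) • ρ s + (ω⁻¹ * sin ((t - s) * ω)) • ρ'') s := by
  have hphase : HasDerivAt (fun s => (t - s) * ω) (-ω) s := by
    simpa using ((hasDerivAt_id s).const_sub t).mul_const ω
  have hcos : HasDerivAt (fun s => cos ((t - s) * ω)) (ω * sin ((t - s) * ω)) s :=
    ((hasDerivAt_cos _).comp s hphase).congr_deriv (by ring)
  have hsin : HasDerivAt (fun s => ω⁻¹ * sin ((t - s) * ω)) (-cos ((t - s) * ω)) s :=
    (((hasDerivAt_sin _).comp s hphase).const_mul ω⁻¹).congr_deriv (by field_simp)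
  refine ((hcos.smul hρ).add (hsin.smul hρ')).congr_deriv ?_
  rw [neg_smul]
  abel

theorem norm_integral_inv_mul_sin_smul_le {ω : ℝ} (hω : 0 < ω) {g : ℝ → E} {t M : ℝ}
    (ht : 0 ≤ t) (hM : ∀ s ∈ Set.Icc 0 t, ‖g s‖ ≤ M) :
    ‖∫ s in (0 : ℝ)..t, (ω⁻¹ * sin ((t - s) * ω)) • g s‖ ≤ t / ω * M := by
  have hbound : ∀ s ∈ Set.uIoc 0 t, ‖(ω⁻¹ * sin ((t - s) * ω)) • g s‖ ≤ ω⁻¹ * M := by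
    intro s hs
    rw [Set.uIoc_of_le ht] at hs
    rw [norm_smul, norm_mul, Real.norm_of_nonneg (inv_pos.mpr hω).le]
    calc ω⁻¹ * ‖sin ((t - s) * ω)‖ * ‖g s‖ ≤ ω⁻¹ * 1 * M := by
          gcongr
          · exact abs_sin_le_one _
          · exact hM s (Set.Ioc_subset_Icc_self hs)
      _ = ω⁻¹ * M := by rw [mul_one]
  calc _ ≤ ω⁻¹ * M * |t - 0| := norm_integral_le_of_norm_le_const hbound
    _ = t / ω * M := by rw [sub_zero, abs_of_nonneg ht]; ring

variable [CompleteSpace E]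

/-- Duhamel's formula for `u'' + ω² u = ω² ρ`, integrated by parts twice. -/
theorem integral_sin_smul_eq {ω : ℝ} (hω : ω ≠ 0) {ρ : ℝ → E} (hρ : ContDiff ℝ 2 ρ) (t : ℝ) :
    ∫ s in (0 : ℝ)..t, (ω * sin ((t - s) * ω)) • ρ s =
      ρ t - cos (t * ω) • ρ 0 - (ω⁻¹ * sin (t * ω)) • deriv ρ 0
        - ∫ s in (0 : ℝ)..t, (ω⁻¹ * sin ((t - s) * ω)) • deriv (deriv ρ) s := by
  obtain ⟨hρ_diff, -, hρ'⟩ :=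
    contDiff_succ_iff_deriv.mp (by exact_mod_cast hρ : ContDiff ℝ (1 + 1) ρ)
  have hρ'_diff : Differentiable ℝ (deriv ρ) := hρ'.differentiable one_ne_zero
  have hphase : Continuous fun s => sin ((t - s) * ω) := by fun_prop
  have hint₁ : IntervalIntegrable (fun s => (ω * sin ((t - s) * ω)) • ρ s) volume 0 t :=
    ((continuous_const.mul hphase).smul hρ.continuous).intervalIntegrable 0 t
  have hint₂ : IntervalIntegrable
      (fun s => (ω⁻¹ * sin ((t - s) * ω)) • deriv (deriv ρ) s) volume 0 t :=
    ((continuous_const.mul hphase).smul (hρ'.continuous_deriv le_rfl)).intervalIntegrable 0 t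
  have hFTC := integral_eq_sub_of_hasDerivAt
    (fun s _ => hasDerivAt_cos_smul_add_sin_smul (t := t) hω (hρ_diff s).hasDerivAt
      (hρ'_diff s).hasDerivAt) (hint₁.add hint₂)
  rw [integral_add hint₁ hint₂] at hFTC
  simp only [sub_self, zero_mul, cos_zero, sin_zero, mul_zero, one_smul, zero_smul, add_zero,
    sub_zero] at hFTC
  rw [eq_sub_iff_add_eq.mpr hFTC]
  abel

end Duhamel

/-- **Oscillatory Duhamel estimate.** For `ω > 0` and a `C²` function `ρ : [0,∞) → ℂ`
(formalized as a `C²` function on `ℝ`), for every `t ≥ 0` and every bound `M` on `ρ''`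
on `[0,t]`:
`| ∫₀ᵗ ω ρ(s) sin((t−s)ω) ds − ρ(t) + ρ(0) cos(tω) + (ρ'(0)/ω) sin(tω) | ≤ (t/ω)·M`. -/
theorem duhamel_oscillatory_estimate
    (ω : ℝ) (hω : 0 < ω) (ρ : ℝ → ℂ) (hρ : ContDiff ℝ 2 ρ)
    (t : ℝ) (ht : 0 ≤ t) (M : ℝ)
    (hM : ∀ s ∈ Set.Icc (0 : ℝ) t, ‖deriv (deriv ρ) s‖ ≤ M) :
    ‖(∫ s in (0 : ℝ)..t, ((ω * Real.sin ((t - s) * ω) : ℝ) : ℂ) * ρ s)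
        - ρ t + ρ 0 * ((Real.cos (t * ω) : ℝ) : ℂ)
        + deriv ρ 0 / (ω : ℂ) * ((Real.sin (t * ω) : ℝ) : ℂ)‖
      ≤ t / ω * M := by
  have hduhamel := integral_sin_smul_eq hω.ne' hρ t
  simp only [Complex.real_smul] at hduhamel
  rw [hduhamel]
  calc _ = ‖∫ s in (0 : ℝ)..t, (ω⁻¹ * sin ((t - s) * ω)) • deriv (deriv ρ) s‖ := by
        rw [← norm_neg]
        congr 1
        simp only [Complex.real_smul]
        push_cast
        ring
    _ ≤ t / ω * M := norm_integral_inv_mul_sin_smul_le hω ht hM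
end

section
/- Let K ⊂ 𝕋² be compact and 𝔟 : 𝕋² → ℝ continuous with 𝔟 > 0 on K, and suppose K satisfies the geometric control condition: for every x ∈ 𝕋² and every unit vector e ∈ S¹ there exists y ≥ 0 with x + ye ∈ K. Then there exist b̲ > 0, d > 0 and D > 0 such that 𝔟 ≥ b̲ on K_{2d}, and for every x ∈ 𝕋² and every unit vector e ∈ S¹ there exists t ∈ [0,D] such that x + se ∈ K_d for all s ∈ [t, t + d/2]. -/
noncomputable section

open MeasureTheory Real

/-- Points of the plane; the torus `𝕋²` is represented via `ℤ²`-periodic objects on `ℝ²`. -/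
abbrev V2 := ℝ × ℝ

/-- `v ↦ v⊥ = (v₂, -v₁)`. -/
def pperp (v : V2) : V2 := (v.2, -v.1)

/-- Euclidean norm on `ℝ²`. -/
noncomputable def en (v : V2) : ℝ := Real.sqrt (v.1 ^ 2 + v.2 ^ 2)

/-- Relativistic velocity `v̂ = v/√(1+|v|²/c²)` for speed of light `c`. -/
noncomputable def vhat (c : ℝ) (v : V2) : V2 :=
  (1 / Real.sqrt (1 + (v.1 ^ 2 + v.2 ^ 2) / c ^ 2)) • v

/-- `ℤ²`-periodicity of a function on `ℝ²` (i.e. the function lives on the torus `𝕋²`). -/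
def Zper {α : Type*} (g : V2 → α) : Prop :=
  ∀ (x : V2) (m n : ℤ), g (x.1 + (m : ℝ), x.2 + (n : ℝ)) = g x

/-- A fundamental domain for the torus. -/
def unitSq : Set V2 := Set.Icc ((0 : ℝ), (0 : ℝ)) ((1 : ℝ), (1 : ℝ))

/-- Integral over the torus of a (periodic) function. -/
noncomputable def intT2 (g : V2 → ℝ) : ℝ := ∫ x in unitSq, g x

/-- Integral over `𝕋² × ℝ²`. -/
noncomputable def intT2R2 (g : V2 → V2 → ℝ) : ℝ := ∫ x in unitSq, ∫ v : V2, g x v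

/-- Spatial divergence of a vector field on `ℝ²`. -/
noncomputable def divF (E : V2 → V2) (x : V2) : ℝ :=
  fderiv ℝ (fun y => (E y).1) x ((1 : ℝ), (0 : ℝ)) +
    fderiv ℝ (fun y => (E y).2) x ((0 : ℝ), (1 : ℝ))

/-- Geometric control condition for a (periodic) set `ω ⊆ 𝕋²`. -/
def GCC (ω : Set V2) : Prop :=
  ∀ x e : V2, en e = 1 → ∃ y : ℝ, 0 ≤ y ∧ x + y • e ∈ ω

/-- Open ball of the torus, of center `x₀` and radius `r` (as a periodic subset of `ℝ²`). -/
def ballT2 (x₀ : V2) (r : ℝ) : Set V2 :=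
  {x : V2 | ∃ m n : ℤ, en (x.1 - (x₀.1 + (m : ℝ)), x.2 - (x₀.2 + (n : ℝ))) < r}

/-- The full preimage in `ℝ²` of the image in `𝕋²` of the line through `p` directed by `d`. -/
def periodizedLine (p d : V2) : Set V2 :=
  {x : V2 | ∃ (t : ℝ) (m n : ℤ), x = p + t • d + ((m : ℝ), (n : ℝ))}

/-- The strip assumption: `ω` contains the image of a straight line of `ℝ²`
which is closed in the torus. -/
def StripAssumption (ω : Set V2) : Prop :=
  ∃ p d : V2, d ≠ 0 ∧ IsClosed (periodizedLine p d) ∧ periodizedLine p d ⊆ ω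

/-- All iterated derivatives of order at most `k` are bounded by `κ` in sup norm. -/
def DerivBound {E F : Type*} [NormedAddCommGroup E] [NormedSpace ℝ E]
    [NormedAddCommGroup F] [NormedSpace ℝ F] (k : ℕ) (κ : ℝ) (g : E → F) : Prop :=
  ∀ i : ℕ, i ≤ k → ∀ p, ‖iteratedFDeriv ℝ i g p‖ ≤ κ

/-- Relativistic characteristics for the force field `Force`, with speed of light `c`,
starting from `(x,v)` at time `s`. -/
def IsRelChar (c : ℝ) (Force : ℝ → V2 → V2 → V2) (s : ℝ) (x v : V2)
    (X V : ℝ → V2) : Prop :=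
  X s = x ∧ V s = v ∧
    ∀ t : ℝ, HasDerivAt X (vhat c (V t)) t ∧ HasDerivAt V (Force t (X t) (V t)) t

/-- `(F, E, b)` is a classical, `𝕋²`-periodic solution on `[0,T]` of the 2D relativistic
Vlasov–Maxwell system with speed of light `c` and source `S`. -/
def IsVMSolution (c T : ℝ) (F : ℝ × V2 × V2 → ℝ) (E : ℝ × V2 → V2)
    (b : ℝ × V2 → ℝ) (S : ℝ × V2 × V2 → ℝ) : Prop :=
  ContDiff ℝ 1 F ∧ ContDiff ℝ 1 E ∧ ContDiff ℝ 1 b ∧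
  (∀ t v, Zper fun x => F (t, x, v)) ∧ (∀ t, Zper fun x => E (t, x)) ∧
  (∀ t, Zper fun x => b (t, x)) ∧
  ∀ t ∈ Set.Icc (0 : ℝ) T, ∀ x v : V2,
    -- Vlasov equation: ∂ₜf + v̂·∇ₓf + (E + c⁻¹ v̂⊥ b)·∇ᵥf = S
    (fderiv ℝ F (t, x, v)
        ((1 : ℝ), vhat c v, E (t, x) + (c⁻¹ * b (t, x)) • pperp (vhat c v))
      = S (t, x, v)) ∧
    -- ∂ₜE₁ − c ∂_{x₂} b = −∫ f v̂₁ dv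
    (fderiv ℝ (fun p => (E p).1) (t, x) ((1 : ℝ), ((0 : ℝ), (0 : ℝ)))
        - c * fderiv ℝ b (t, x) ((0 : ℝ), ((0 : ℝ), (1 : ℝ)))
      = -∫ w : V2, F (t, x, w) * (vhat c w).1) ∧
    -- ∂ₜE₂ + c ∂_{x₁} b = −∫ f v̂₂ dv
    (fderiv ℝ (fun p => (E p).2) (t, x) ((1 : ℝ), ((0 : ℝ), (0 : ℝ)))
        + c * fderiv ℝ b (t, x) ((0 : ℝ), ((1 : ℝ), (0 : ℝ)))
      = -∫ w : V2, F (t, x, w) * (vhat c w).2) ∧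
    -- ∂ₜb + c (∂_{x₁}E₂ − ∂_{x₂}E₁) = 0
    (fderiv ℝ b (t, x) ((1 : ℝ), ((0 : ℝ), (0 : ℝ)))
        + c * (fderiv ℝ (fun p => (E p).2) (t, x) ((0 : ℝ), ((1 : ℝ), (0 : ℝ)))
            - fderiv ℝ (fun p => (E p).1) (t, x) ((0 : ℝ), ((0 : ℝ), (1 : ℝ)))) = 0) ∧
    -- Gauss law: ∂_{x₁}E₁ + ∂_{x₂}E₂ = ∫ f dv − ∫∫ f dv dx
    (fderiv ℝ (fun p => (E p).1) (t, x) ((0 : ℝ), ((1 : ℝ), (0 : ℝ)))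
        + fderiv ℝ (fun p => (E p).2) (t, x) ((0 : ℝ), ((0 : ℝ), (1 : ℝ)))
      = (∫ w : V2, F (t, x, w)) - intT2R2 fun y w => F (t, y, w))


/-- The `r`-thickening `K_r` of a (periodic) set `K ⊆ 𝕋²`, for the torus distance. -/
def Kthick (K : Set V2) (r : ℝ) : Set V2 :=
  {x : V2 | ∃ y ∈ K, ∃ m n : ℤ, en (x.1 - y.1 - (m : ℝ), x.2 - y.2 - (n : ℝ)) ≤ r}

/-!
Both constants come from compactness on a fundamental domain. Since `𝔟 > 0` on the compact set
`K ∩ [0,1]²`, it stays above some `b̲ > 0` on a closed `δ`-neighbourhood of it, and periodicity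
carries this to `K_δ`; take `d = δ / 2`. For the time `D`: if the ray from `x₀` in direction `e₀`
hits `K` at time `y`, then every ray from `(x, e)` close to `(x₀, e₀)` is within `d/2` of that
hit point at time `y`, hence stays in `K_d` during `[y, y + d/2]`; finitely many such neighbourhoods
cover the compact set `[0,1]² × S¹`.
-/

open Filter Topology

lemma en_eq_norm_toLp (v : V2) : en v = ‖WithLp.toLp 2 v‖ := by
  simp [en, WithLp.prod_norm_eq_of_L2, sq_abs]

lemma en_zero : en 0 = 0 := by simp [en]

lemma en_add_le (a b : V2) : en (a + b) ≤ en a + en b := by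
  simpa only [en_eq_norm_toLp, WithLp.toLp_add] using norm_add_le _ _

lemma en_smul (s : ℝ) (v : V2) : en (s • v) = |s| * en v := by
  rw [en_eq_norm_toLp, en_eq_norm_toLp, WithLp.toLp_smul, norm_smul, Real.norm_eq_abs]

lemma norm_le_en (v : V2) : ‖v‖ ≤ en v :=
  max_le (Real.abs_le_sqrt (by nlinarith [sq_nonneg v.2]))
    (Real.abs_le_sqrt (by nlinarith [sq_nonneg v.1]))

lemma continuous_en : Continuous en := by
  unfold en; fun_prop

lemma isCompact_en_eq_one : IsCompact {e : V2 | en e = 1} := by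
  refine Metric.isCompact_of_isClosed_isBounded (isClosed_eq continuous_en continuous_const) ?_
  refine (Metric.isBounded_closedBall (x := (0 : V2)) (r := 1)).subset fun e he => ?_
  simpa using (norm_le_en e).trans_eq he

lemma fract_mem_unitSq (x : V2) : (Int.fract x.1, Int.fract x.2) ∈ unitSq :=
  ⟨⟨Int.fract_nonneg _, Int.fract_nonneg _⟩, ⟨(Int.fract_lt_one _).le, (Int.fract_lt_one _).le⟩⟩

lemma Zper.apply_fract_add {α : Type*} {g : V2 → α} (hg : Zper g) (x v : V2) :
    g ((Int.fract x.1, Int.fract x.2) + v) = g (x + v) := by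
  rw [← hg _ ⌊x.1⌋ ⌊x.2⌋]
  congr 1
  ext <;> simp only [Prod.fst_add, Prod.snd_add] <;>
    linarith [Int.fract_add_floor x.1, Int.fract_add_floor x.2]

lemma Zper.apply_sub_int {α : Type*} {g : V2 → α} (hg : Zper g) (x : V2) (m n : ℤ) :
    g (x.1 - m, x.2 - n) = g x := by
  simpa using (hg (x.1 - m, x.2 - n) m n).symm

lemma Kthick_zper (K : Set V2) (r : ℝ) : Zper (· ∈ Kthick K r) := by
  intro x m n
  apply propext
  constructor
  · rintro ⟨y, hy, a, b, h⟩
    exact ⟨y, hy, a - m, b - n, by convert h using 3 <;> push_cast <;> ring⟩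
  · rintro ⟨y, hy, a, b, h⟩
    exact ⟨y, hy, a + m, b + n, by convert h using 3 <;> push_cast <;> ring⟩

lemma mem_Kthick_of_en_sub_le {K : Set V2} {r : ℝ} {x y : V2} (hy : y ∈ K) (h : en (x - y) ≤ r) :
    x ∈ Kthick K r :=
  ⟨y, hy, 0, 0, by simpa [← Prod.mk_sub_mk] using h⟩

lemma Kthick_subset_Kthick_inter_unitSq {K : Set V2} (hK : Zper (· ∈ K)) (r : ℝ) :
    Kthick K r ⊆ Kthick (K ∩ unitSq) r := by
  rintro x ⟨y, hy, m, n, h⟩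
  refine ⟨(Int.fract y.1, Int.fract y.2), ⟨?_, fract_mem_unitSq y⟩, m + ⌊y.1⌋, n + ⌊y.2⌋, ?_⟩
  · simpa using (hK.apply_fract_add y 0).mpr (by simpa using hy)
  · convert h using 3 <;> push_cast <;> linarith [Int.fract_add_floor y.1, Int.fract_add_floor y.2]

lemma IsCompact.exists_pos_le_on_cthickening {X : Type*} [PseudoMetricSpace X] [ProperSpace X]
    {C : Set X} (hC : IsCompact C) {f : X → ℝ} (hf : Continuous f) (hpos : ∀ x ∈ C, 0 < f x) :
    ∃ δ > 0, ∃ b > 0, ∀ x ∈ Metric.cthickening δ C, b ≤ f x := by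
  obtain ⟨δ, hδ, hsub⟩ := hC.exists_cthickening_subset_open (isOpen_lt continuous_const hf) hpos
  obtain ⟨b, hb, hle⟩ := hC.cthickening.exists_forall_le' hf.continuousOn fun x hx => hsub hx
  exact ⟨δ, hδ, b, hb, hle⟩

lemma le_of_mem_Kthick {K : Set V2} (hK : Zper (· ∈ K)) {f : V2 → ℝ} (hf : Zper f) {r b : ℝ}
    (hb : ∀ x ∈ Metric.cthickening r (K ∩ unitSq), b ≤ f x) (x : V2) (hx : x ∈ Kthick K r) :
    b ≤ f x := by
  obtain ⟨y, hy, m, n, h⟩ := Kthick_subset_Kthick_inter_unitSq hK r hx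
  rw [← hf.apply_sub_int x m n]
  refine hb _ (Metric.mem_cthickening_of_dist_le _ y r _ hy
    ((dist_eq_norm _ _).trans_le ((norm_le_en _).trans ?_)))
  rwa [Prod.mk_sub_mk, sub_right_comm x.1, sub_right_comm x.2]

lemma IsCompact.exists_uniform_time {X : Type*} [TopologicalSpace X] {Q : Set X}
    (hQ : IsCompact Q) {P : ℝ → X → Prop} (hP : ∀ q ∈ Q, ∃ t ≥ 0, ∀ᶠ q' in 𝓝[Q] q, P t q') :
    ∃ D > 0, ∀ q ∈ Q, ∃ t ∈ Set.Icc 0 D, P t q := by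
  refine hQ.induction_on (p := fun S => ∃ D > 0, ∀ q ∈ S, ∃ t ∈ Set.Icc 0 D, P t q)
    ⟨1, one_pos, by simp⟩ ?_ ?_ ?_
  · exact fun S T hST ⟨D, hD, h⟩ => ⟨D, hD, fun q hq => h q (hST hq)⟩
  · rintro S T ⟨D₁, hD₁, h₁⟩ ⟨D₂, hD₂, h₂⟩
    refine ⟨max D₁ D₂, lt_max_of_lt_left hD₁, ?_⟩
    rintro q (hq | hq)
    · obtain ⟨t, ht, hPt⟩ := h₁ q hq
      exact ⟨t, ⟨ht.1, ht.2.trans (le_max_left _ _)⟩, hPt⟩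
    · obtain ⟨t, ht, hPt⟩ := h₂ q hq
      exact ⟨t, ⟨ht.1, ht.2.trans (le_max_right _ _)⟩, hPt⟩
  · intro q hq
    obtain ⟨t, ht, hev⟩ := hP q hq
    exact ⟨_, hev, t + 1, by linarith, fun q' hq' => ⟨t, ⟨ht, by linarith⟩, hq'⟩⟩

lemma en_add_smul_sub_le {x e k : V2} {y r s : ℝ} (he : en e = 1) (hs : s ∈ Set.Icc y (y + r)) :
    en (x + s • e - k) ≤ en (x + y • e - k) + r := by
  have hsplit : x + s • e - k = (x + y • e - k) + (s - y) • e := by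
    rw [sub_smul]; abel
  calc en (x + s • e - k) ≤ en (x + y • e - k) + en ((s - y) • e) := hsplit ▸ en_add_le _ _
    _ = en (x + y • e - k) + (s - y) := by
      rw [en_smul, he, mul_one, abs_of_nonneg (by linarith [hs.1])]
    _ ≤ en (x + y • e - k) + r := by linarith [hs.2]

lemma GCC.exists_uniform_time_in_Kthick {K : Set V2} (hK : GCC K) {d : ℝ} (hd : 0 < d) :
    ∃ D > 0, ∀ x e : V2, en e = 1 → ∃ t ∈ Set.Icc (0 : ℝ) D,
      ∀ s ∈ Set.Icc t (t + d / 2), x + s • e ∈ Kthick K d := by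
  set P : ℝ → V2 × V2 → Prop := fun t q => ∀ s ∈ Set.Icc t (t + d / 2), q.1 + s • q.2 ∈ Kthick K d
  have hlocal : ∀ q ∈ unitSq ×ˢ {e : V2 | en e = 1}, ∃ t ≥ 0,
      ∀ᶠ q' in 𝓝[unitSq ×ˢ {e : V2 | en e = 1}] q, P t q' := by
    rintro ⟨x₀, e₀⟩ ⟨-, he₀⟩
    obtain ⟨y, hy, hyK⟩ := hK x₀ e₀ he₀
    have hnear : ∀ᶠ q in 𝓝 (x₀, e₀), en (q.1 + y • q.2 - (x₀ + y • e₀)) < d / 2 := by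
      refine (isOpen_lt (continuous_en.comp (by fun_prop)) continuous_const).mem_nhds ?_
      simpa [en_zero] using half_pos hd
    refine ⟨y, hy, eventually_nhdsWithin_iff.mpr (hnear.mono fun q hq hqQ s hs => ?_)⟩
    refine mem_Kthick_of_en_sub_le hyK ((en_add_smul_sub_le hqQ.2 hs).trans ?_)
    linarith
  obtain ⟨D, hD, hunif⟩ := (isCompact_Icc.prod isCompact_en_eq_one).exists_uniform_time hlocal
  refine ⟨D, hD, fun x e he => ?_⟩
  obtain ⟨t, ht, hray⟩ := hunif (_, e) ⟨fract_mem_unitSq x, he⟩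
  exact ⟨t, ht, fun s hs => (Kthick_zper K d).apply_fract_add x (s • e) ▸ hray s hs⟩

/-- **Thickened geometric control condition (Lemma A.1): if the compact set `K`
satisfies the geometric control condition and `𝔟 > 0` on `K`, then there are
`b̲, d, D > 0` with `𝔟 ≥ b̲` on `K_{2d}`, and every ray spends, before time `D`,
a time interval of length `d/2` inside `K_d`.** -/
theorem thickened_geometric_control
    (K : Set V2) (hKcl : IsClosed K) (hKper : Zper fun x => x ∈ K)
    (𝔟 : V2 → ℝ) (h𝔟c : Continuous 𝔟) (h𝔟per : Zper 𝔟)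
    (hpos : ∀ x ∈ K, 0 < 𝔟 x)
    (hGCC : ∀ x e : V2, en e = 1 → ∃ y : ℝ, 0 ≤ y ∧ x + y • e ∈ K) :
    ∃ b > (0 : ℝ), ∃ d > (0 : ℝ), ∃ D > (0 : ℝ),
      (∀ x ∈ Kthick K (2 * d), b ≤ 𝔟 x) ∧
      (∀ x e : V2, en e = 1 → ∃ t ∈ Set.Icc (0 : ℝ) D,
        ∀ s ∈ Set.Icc t (t + d / 2), x + s • e ∈ Kthick K d) := by
  obtain ⟨δ, hδ, b, hb, hbound⟩ := (isCompact_Icc.inter_left hKcl).exists_pos_le_on_cthickening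
    h𝔟c fun x hx => hpos x hx.1
  obtain ⟨D, hD, hray⟩ := GCC.exists_uniform_time_in_Kthick hGCC (half_pos hδ)
  refine ⟨b, hb, δ / 2, half_pos hδ, D, hD, fun x hx => ?_, hray⟩
  rw [mul_div_cancel₀ δ two_ne_zero] at hx
  exact le_of_mem_Kthick hKper h𝔟per hbound x hx

end
end

section
/- Let x₀ ∈ 𝕋² and r > 0. The set of unit directions e ∈ S¹ for which there exists a point x ∈ 𝕋² whose half-line trajectory avoids the ball B(x₀,r), i.e. the set {e ∈ S¹ : ∃x ∈ 𝕋², ∀t ≥ 0, x + te ∉ B(x₀,r)}, is finite. -/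
noncomputable section

open MeasureTheory Real

lemma en_pair (u v : ℝ) : en (u, v) = Real.sqrt (u ^ 2 + v ^ 2) := rfl

lemma en_zero_left (v : ℝ) : en (0, v) = |v| := by
  rw [en_pair, show (0:ℝ) ^ 2 + v ^ 2 = v ^ 2 by ring, Real.sqrt_sq_eq_abs]

lemma en_swap (u v : ℝ) : en (u, v) = en (v, u) := by
  rw [en_pair, en_pair, add_comm]

/-- Sweeping lemma: an arithmetic progression with positive step `δ < 2r`
enters the `r`-neighborhood of an integer at an arbitrarily late index. -/
lemma sweep_lemma (β δ r K : ℝ) (hδ : 0 < δ) (hδr : δ < 2 * r) :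
    ∃ k : ℤ, K ≤ (k : ℝ) ∧ ∃ n : ℤ, |β + (k : ℝ) * δ - (n : ℝ)| < r := by
  obtain ⟨n, hn⟩ : ∃ n : ℤ, β + (⌈K⌉ : ℝ) * δ + r + 1 ≤ (n : ℝ) :=
    ⟨⌈β + (⌈K⌉ : ℝ) * δ + r + 1⌉, Int.le_ceil _⟩
  set x : ℝ := ((n : ℝ) - r - β) / δ with hx
  have hδ' : (0 : ℝ) < 1 / δ := by positivity
  have h1 : (⌈K⌉ : ℝ) + 1 / δ ≤ x := by
    rw [hx, le_div_iff₀ hδ]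
    have h3 : 1 / δ * δ = 1 := one_div_mul_cancel (ne_of_gt hδ)
    nlinarith [hn]
  have h2 : x < (⌊x⌋ : ℝ) + 1 := Int.lt_floor_add_one x
  have h3 : (⌊x⌋ : ℝ) ≤ x := Int.floor_le x
  have hxδ : x * δ = (n : ℝ) - r - β := div_mul_cancel₀ _ (ne_of_gt hδ)
  have hK : K ≤ (⌈K⌉ : ℝ) := Int.le_ceil K
  refine ⟨⌊x⌋ + 1, ?_, n, ?_⟩
  · push_cast
    linarith
  · push_cast
    rw [abs_lt]
    have m1 : x * δ < ((⌊x⌋ : ℝ) + 1) * δ := by nlinarith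
    have m2 : ((⌊x⌋ : ℝ) + 1) * δ ≤ (x + 1) * δ := by nlinarith
    constructor <;> nlinarith

/-- One-dimensional key lemma: if every point `β + kα` (for all late integer indices `k`)
stays at distance `≥ r` from `ℤ`, then `α` is rational with denominator at most `⌈1/r⌉`. -/
lemma oneD_lemma (α β r K₀ : ℝ) (hr : 0 < r)
    (h : ∀ k : ℤ, K₀ ≤ (k : ℝ) → ∀ n : ℤ, r ≤ |β + (k : ℝ) * α - (n : ℝ)|) :
    ∃ q : ℤ, 0 < q ∧ q ≤ (⌈1 / r⌉₊ : ℤ) ∧ ∃ p : ℤ, (q : ℝ) * α = (p : ℝ) := by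
  have hM0 : 0 < ⌈1 / r⌉₊ := Nat.ceil_pos.mpr (by positivity)
  obtain ⟨p, q, hq0, hqM, happ⟩ := Real.exists_int_int_abs_mul_sub_le α hM0
  refine ⟨q, hq0, by exact_mod_cast hqM, p, ?_⟩
  by_contra hne
  have hq1 : (1 : ℝ) ≤ (q : ℝ) := by exact_mod_cast hq0
  set δ : ℝ := (q : ℝ) * α - p with hδdef
  have hδne : δ ≠ 0 := sub_ne_zero.mpr hne
  have hδlt : |δ| < 2 * r := by
    have h2 : (1 : ℝ) ≤ (⌈1 / r⌉₊ : ℝ) * r := (div_le_iff₀ hr).mp (Nat.le_ceil _)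
    have h1 : (1 : ℝ) / ((⌈1 / r⌉₊ : ℕ) + 1 : ℝ) < 2 * r := by
      rw [div_lt_iff₀ (by positivity)]
      nlinarith
    exact lt_of_le_of_lt happ h1
  rcases hδne.lt_or_gt with hneg | hpos
  · obtain ⟨k, hkK, n, hkn⟩ := sweep_lemma (-β) (-δ) r (max K₀ 0) (by linarith)
      (by rw [abs_of_neg hneg] at hδlt; linarith)
    have hk0 : (0 : ℝ) ≤ (k : ℝ) := le_trans (le_max_right _ _) hkK
    have hkK₀ : K₀ ≤ (k : ℝ) := le_trans (le_max_left _ _) hkK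
    have hidx : K₀ ≤ ((k * q : ℤ) : ℝ) := by
      push_cast
      nlinarith [mul_le_mul_of_nonneg_left hq1 hk0]
    have hcontra := h (k * q) hidx (k * p - n)
    have heq : β + ((k * q : ℤ) : ℝ) * α - ((k * p - n : ℤ) : ℝ)
        = -(-β + (k : ℝ) * (-δ) - (n : ℝ)) := by push_cast; rw [hδdef]; ring
    rw [heq, abs_neg] at hcontra
    exact absurd hkn (not_lt.mpr hcontra)
  · obtain ⟨k, hkK, n, hkn⟩ := sweep_lemma β δ r (max K₀ 0) hpos
      (by rw [abs_of_pos hpos] at hδlt; linarith)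
    have hk0 : (0 : ℝ) ≤ (k : ℝ) := le_trans (le_max_right _ _) hkK
    have hkK₀ : K₀ ≤ (k : ℝ) := le_trans (le_max_left _ _) hkK
    have hidx : K₀ ≤ ((k * q : ℤ) : ℝ) := by
      push_cast
      nlinarith [mul_le_mul_of_nonneg_left hq1 hk0]
    have hcontra := h (k * q) hidx (n + k * p)
    have heq : β + ((k * q : ℤ) : ℝ) * α - ((n + k * p : ℤ) : ℝ)
        = β + (k : ℝ) * δ - (n : ℝ) := by push_cast; rw [hδdef]; ring
    rw [heq] at hcontra
    exact absurd hkn (not_lt.mpr hcontra)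

/-- If a half-line with direction `(a, b)`, `a ≠ 0`, avoids the ball `B(x₀, r)` on the torus,
then the slope `b / a` is rational with denominator at most `⌈1/r⌉`. -/
lemma coord_rat (x₀ x : V2) (r : ℝ) (hr : 0 < r) (a b : ℝ) (ha : a ≠ 0)
    (havd : ∀ t : ℝ, 0 ≤ t → ((x.1 + t * a, x.2 + t * b) : V2) ∉ ballT2 x₀ r) :
    ∃ q : ℤ, 0 < q ∧ q ≤ (⌈1 / r⌉₊ : ℤ) ∧ ∃ p : ℤ, (q : ℝ) * b = (p : ℝ) * a := by
  have habs : |a| ≠ 0 := abs_ne_zero.mpr ha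
  have habs' : (0 : ℝ) < |a| := abs_pos.mpr ha
  have main : ∀ m : ℤ, 0 ≤ (x₀.1 + (m : ℝ) - x.1) / a →
      ∀ n : ℤ, r ≤ |(x.2 - x₀.2 + (x₀.1 - x.1) * (b / a)) + (m : ℝ) * (b / a) - (n : ℝ)| := by
    intro m ht n
    set t : ℝ := (x₀.1 + (m : ℝ) - x.1) / a with htdef
    have hta : t * a = x₀.1 + (m : ℝ) - x.1 := div_mul_cancel₀ _ ha
    have h2 := havd t ht
    simp only [ballT2, Set.mem_setOf_eq, not_exists, not_lt] at h2
    have h3 := h2 m n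
    have hc1 : x.1 + t * a - (x₀.1 + (m : ℝ)) = 0 := by rw [hta]; ring
    rw [hc1, en_zero_left] at h3
    have hv : x.2 + t * b - (x₀.2 + (n : ℝ))
        = (x.2 - x₀.2 + (x₀.1 - x.1) * (b / a)) + (m : ℝ) * (b / a) - (n : ℝ) := by
      rw [htdef]; field_simp; ring
    rw [hv] at h3
    exact h3
  have key : ∀ k : ℤ, (|x.1 - x₀.1| + 1) ≤ (k : ℝ) →
      ∀ n : ℤ, r ≤ |(x.2 - x₀.2 + (x₀.1 - x.1) * (b / a)) + (k : ℝ) * (b / |a|) - (n : ℝ)| := by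
    intro k hk n
    rcases ha.lt_or_gt with haneg | hapos
    · have h1 := main (-k) (by
        rw [div_nonneg_iff]
        right
        refine ⟨?_, le_of_lt haneg⟩
        push_cast
        have h5 := le_abs_self (x₀.1 - x.1)
        have h6 := abs_sub_comm x₀.1 x.1
        linarith) n
      have h7 : ((-k : ℤ) : ℝ) * (b / a) = (k : ℝ) * (b / |a|) := by
        rw [abs_of_neg haneg, div_neg]
        push_cast
        ring
      rwa [h7] at h1
    · have h1 := main k (by
        apply div_nonneg _ (le_of_lt hapos)
        have h5 := le_abs_self (x.1 - x₀.1)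
        linarith) n
      have h7 : (k : ℝ) * (b / a) = (k : ℝ) * (b / |a|) := by rw [abs_of_pos hapos]
      rwa [h7] at h1
  obtain ⟨q, hq0, hqM, p, hpα⟩ := oneD_lemma (b / |a|) _ r _ hr key
  rw [← mul_div_assoc, div_eq_iff habs] at hpα
  rcases ha.lt_or_gt with haneg | hapos
  · refine ⟨q, hq0, hqM, -p, ?_⟩
    rw [abs_of_neg haneg] at hpα
    push_cast
    linarith [hpα]
  · refine ⟨q, hq0, hqM, p, ?_⟩
    rw [abs_of_pos hapos] at hpα
    linarith [hpα]

/-- Normalization map from integer vectors to unit directions. -/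
noncomputable def gdir (pq : ℤ × ℤ) : V2 :=
  ((1 / Real.sqrt ((pq.1 : ℝ) ^ 2 + (pq.2 : ℝ) ^ 2)) * (pq.1 : ℝ),
   (1 / Real.sqrt ((pq.1 : ℝ) ^ 2 + (pq.2 : ℝ) ^ 2)) * (pq.2 : ℝ))

lemma gdir_of (e : V2) (P Q : ℤ) (lam : ℝ)
    (hs : (0 : ℝ) < (P : ℝ) ^ 2 + (Q : ℝ) ^ 2)
    (h1 : e.1 = lam * (P : ℝ)) (h2 : e.2 = lam * (Q : ℝ))
    (hsum : e.1 ^ 2 + e.2 ^ 2 = 1) :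
    e = gdir (P, Q) ∨ e = gdir (-P, -Q) := by
  set s : ℝ := (P : ℝ) ^ 2 + (Q : ℝ) ^ 2 with hsdef
  have hsq : Real.sqrt s ^ 2 = s := Real.sq_sqrt (le_of_lt hs)
  have hsqpos : 0 < Real.sqrt s := Real.sqrt_pos.mpr hs
  have hnorm : lam ^ 2 * s = 1 := by
    have h4 : lam ^ 2 * s = e.1 ^ 2 + e.2 ^ 2 := by rw [hsdef, h1, h2]; ring
    rw [h4, hsum]
  have hmul : lam ^ 2 * Real.sqrt s ^ 2 = 1 := by rw [hsq]; exact hnorm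
  have hpm : (lam * Real.sqrt s - 1) * (lam * Real.sqrt s + 1) = 0 := by
    linear_combination hmul
  have hP2 : ((-P : ℤ) : ℝ) ^ 2 + ((-Q : ℤ) : ℝ) ^ 2 = s := by
    rw [hsdef]; push_cast; ring
  rcases mul_eq_zero.mp hpm with hcase | hcase
  · left
    have hlam : lam = 1 / Real.sqrt s := by
      rw [eq_div_iff (ne_of_gt hsqpos)]; linarith
    rw [Prod.ext_iff]
    constructor
    · show e.1 = (1 / Real.sqrt ((P : ℝ) ^ 2 + (Q : ℝ) ^ 2)) * (P : ℝ)
      rw [← hsdef, h1, hlam]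
    · show e.2 = (1 / Real.sqrt ((P : ℝ) ^ 2 + (Q : ℝ) ^ 2)) * (Q : ℝ)
      rw [← hsdef, h2, hlam]
  · right
    have hlam : lam = -(1 / Real.sqrt s) := by
      have h9 : lam * Real.sqrt s = -1 := by linarith
      field_simp
      linarith [h9]
    rw [Prod.ext_iff]
    constructor
    · show e.1 = (1 / Real.sqrt (((-P : ℤ) : ℝ) ^ 2 + ((-Q : ℤ) : ℝ) ^ 2)) * ((-P : ℤ) : ℝ)
      rw [hP2, h1, hlam]
      push_cast
      ring
    · show e.2 = (1 / Real.sqrt (((-P : ℤ) : ℝ) ^ 2 + ((-Q : ℤ) : ℝ) ^ 2)) * ((-Q : ℤ) : ℝ)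
      rw [hP2, h2, hlam]
      push_cast
      ring

/-- **On the torus, only finitely many unit directions admit a half-line avoiding
a given ball `B(x₀,r)` with `r > 0`.** -/
theorem finitely_many_bad_directions (x₀ : V2) (r : ℝ) (hr : 0 < r) :
    Set.Finite {e : V2 | en e = 1 ∧
      ∃ x : V2, ∀ t : ℝ, 0 ≤ t → x + t • e ∉ ballT2 x₀ r} := by
  set M : ℤ := (⌈1 / r⌉₊ : ℤ) with hMdef
  have hM1 : 1 ≤ M := by
    rw [hMdef]
    exact_mod_cast Nat.ceil_pos.mpr (by positivity : (0 : ℝ) < 1 / r)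
  set B : ℤ := M * M with hBdef
  have hB1 : 1 ≤ B := by nlinarith
  apply Set.Finite.subset ((Set.finite_Icc ((-B, -B) : ℤ × ℤ) (B, B)).image gdir)
  rintro e ⟨hene, x, havd⟩
  have hsum : e.1 ^ 2 + e.2 ^ 2 = 1 := by
    have h1 : Real.sqrt (e.1 ^ 2 + e.2 ^ 2) = 1 := hene
    have h2 : (0 : ℝ) ≤ e.1 ^ 2 + e.2 ^ 2 := by positivity
    have h3 := Real.sq_sqrt h2
    rw [h1] at h3
    nlinarith [h3]
  have memof : ∀ P Q : ℤ, -B ≤ P → P ≤ B → -B ≤ Q → Q ≤ B → e = gdir (P, Q) →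
      e ∈ gdir '' Set.Icc ((-B, -B) : ℤ × ℤ) (B, B) := by
    intro P Q h1 h2 h3 h4 he
    exact ⟨(P, Q), Set.mem_Icc.mpr ⟨Prod.mk_le_mk.mpr ⟨h1, h3⟩, Prod.mk_le_mk.mpr ⟨h2, h4⟩⟩,
      he.symm⟩
  by_cases hb0 : e.2 = 0
  · rcases gdir_of e 1 0 e.1 (by norm_num) (by push_cast; ring)
      (by push_cast; rw [hb0]; ring) hsum with h | h <;>
      (refine memof _ _ ?_ ?_ ?_ ?_ h <;> omega)
  by_cases ha0 : e.1 = 0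
  · rcases gdir_of e 0 1 e.2 (by norm_num) (by push_cast; rw [ha0]; ring)
      (by push_cast; ring) hsum with h | h <;>
      (refine memof _ _ ?_ ?_ ?_ ?_ h <;> omega)
  -- main case: both components nonzero
  have hpt : ∀ t : ℝ, x + t • e = ((x.1 + t * e.1, x.2 + t * e.2) : V2) := by
    intro t
    rw [Prod.ext_iff]
    constructor <;> simp [smul_eq_mul]
  have havd1 : ∀ t : ℝ, 0 ≤ t → ((x.1 + t * e.1, x.2 + t * e.2) : V2) ∉ ballT2 x₀ r := by
    intro t ht
    rw [← hpt t]
    exact havd t ht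
  obtain ⟨q₁, hq₁0, hq₁M, p₁, hp₁⟩ := coord_rat x₀ x r hr e.1 e.2 ha0 havd1
  have havd2 : ∀ t : ℝ, 0 ≤ t →
      ((x.2 + t * e.2, x.1 + t * e.1) : V2) ∉ ballT2 (x₀.2, x₀.1) r := by
    intro t ht hmem
    obtain ⟨m, n, hmn⟩ := hmem
    refine havd1 t ht ⟨n, m, ?_⟩
    rw [en_swap]
    exact hmn
  obtain ⟨q₂, hq₂0, hq₂M, p₂, hp₂⟩ := coord_rat (x₀.2, x₀.1) (x.2, x.1) r hr e.2 e.1 hb0 havd2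
  have hq₁R : ((q₁ : ℤ) : ℝ) ≠ 0 := Int.cast_ne_zero.mpr (ne_of_gt hq₁0)
  have hq₂R : ((q₂ : ℤ) : ℝ) ≠ 0 := Int.cast_ne_zero.mpr (ne_of_gt hq₂0)
  have hp₁ne : p₁ ≠ 0 := by
    intro h0
    rw [h0] at hp₁
    have h5 : (q₁ : ℝ) * e.2 = 0 := by simpa using hp₁
    rcases mul_eq_zero.mp h5 with h6 | h6
    · exact hq₁R h6
    · exact hb0 h6
  have hp₂ne : p₂ ≠ 0 := by
    intro h0
    rw [h0] at hp₂
    have h5 : (q₂ : ℝ) * e.1 = 0 := by simpa using hp₂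
    rcases mul_eq_zero.mp h5 with h6 | h6
    · exact hq₂R h6
    · exact ha0 h6
  have hpq : p₁ * p₂ = q₁ * q₂ := by
    have hreal : ((p₁ : ℝ) * (p₂ : ℝ)) * (e.1 * e.2) = ((q₁ : ℝ) * (q₂ : ℝ)) * (e.1 * e.2) := by
      linear_combination (-(p₂ : ℝ) * e.2) * hp₁ + (-(q₁ : ℝ) * e.2) * hp₂
    have h7 : (p₁ : ℝ) * (p₂ : ℝ) = (q₁ : ℝ) * (q₂ : ℝ) :=
      mul_right_cancel₀ (mul_ne_zero ha0 hb0) hreal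
    exact_mod_cast h7
  have habsmul : |p₁| * |p₂| = q₁ * q₂ := by
    rw [← abs_mul, hpq, abs_of_pos (mul_pos hq₁0 hq₂0)]
  have hp₂abs : 1 ≤ |p₂| := Int.one_le_abs hp₂ne
  have hp₁B : |p₁| ≤ B := by nlinarith [abs_nonneg p₁, hq₁M, hq₂M, hq₁0, hq₂0, hM1]
  have hq₁B : q₁ ≤ B := by nlinarith [hq₁M, hM1]
  obtain ⟨hp₁lo, hp₁hi⟩ := abs_le.mp hp₁B
  have he1 : e.1 = (e.1 / (q₁ : ℝ)) * (q₁ : ℝ) := by field_simp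
  have he2 : e.2 = (e.1 / (q₁ : ℝ)) * (p₁ : ℝ) := by
    rw [div_mul_eq_mul_div, eq_div_iff hq₁R]
    linear_combination hp₁
  have hq₁Rpos : (0 : ℝ) < (q₁ : ℝ) := by exact_mod_cast hq₁0
  have hs : (0 : ℝ) < (q₁ : ℝ) ^ 2 + (p₁ : ℝ) ^ 2 := by nlinarith [sq_nonneg (p₁ : ℝ)]
  rcases gdir_of e q₁ p₁ (e.1 / (q₁ : ℝ)) hs he1 he2 hsum with h | h <;>
    (refine memof _ _ ?_ ?_ ?_ ?_ h <;> omega)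

end
end
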